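/- The octonion norm is multiplicative: for all octonions o₁, o₂ one has |o₁ o₂| = |o₁| |o₂|. -/

import Mathlib

/-! Writing `o₁ = (a, b)` and `o₂ = (c, d)`, expand `‖ac − d̄b‖² + ‖da + bc̄‖²`. The four square terms
give `(‖a‖² + ‖b‖²)(‖c‖² + ‖d‖²)` because the quaternion norm is multiplicative, and the two
cross terms `⟪ac, d̄b⟫ = Re(a c b̄ d)` and `⟪da, bc̄⟫ = Re(d a c b̄)` cancel since `Re(xy) = Re(yx)`. -/

noncomputable section

open MeasureTheory Real

/-- The octonions, realized via the Cayley–Dickson construction on the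
quaternions: an octonion is a pair `(a, b)` of quaternions, thought of as
`a + b·e₄` with `e₄ = (0,1)`. -/
structure Octonion where
  q₁ : Quaternion ℝ
  q₂ : Quaternion ℝ

namespace Octonion

instance : Zero Octonion := ⟨⟨0, 0⟩⟩
instance : One Octonion := ⟨⟨1, 0⟩⟩
instance : Add Octonion := ⟨fun x y => ⟨x.q₁ + y.q₁, x.q₂ + y.q₂⟩⟩
instance : Neg Octonion := ⟨fun x => ⟨-x.q₁, -x.q₂⟩⟩
instance : Sub Octonion := ⟨fun x y => ⟨x.q₁ - y.q₁, x.q₂ - y.q₂⟩⟩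
instance : SMul ℝ Octonion := ⟨fun r x => ⟨r • x.q₁, r • x.q₂⟩⟩

/-- Cayley–Dickson multiplication: `(a,b)(c,d) = (ac − d̄b, da + b c̄)`. -/
instance : Mul Octonion :=
  ⟨fun x y => ⟨x.q₁ * y.q₁ - star y.q₂ * x.q₂, y.q₂ * x.q₁ + x.q₂ * star y.q₁⟩⟩

/-- Octonionic conjugation (negating all seven imaginary components). -/
def conj (x : Octonion) : Octonion := ⟨star x.q₁, -x.q₂⟩

/-- Embedding of the quaternions into the octonions. -/
def ofQuat (a : Quaternion ℝ) : Octonion := ⟨a, 0⟩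

/-- The imaginary unit `e₄ = (0, 1)`. -/
def e₄ : Octonion := ⟨0, 1⟩

def e₁ : Octonion := ofQuat ⟨0, 1, 0, 0⟩
def e₂ : Octonion := ofQuat ⟨0, 0, 1, 0⟩
def e₃ : Octonion := ofQuat ⟨0, 0, 0, 1⟩
def e₅ : Octonion := ⟨0, ⟨0, 1, 0, 0⟩⟩
def e₆ : Octonion := ⟨0, ⟨0, 0, 1, 0⟩⟩
def e₇ : Octonion := ⟨0, ⟨0, 0, 0, 1⟩⟩

/-- The octonion norm `|o| = √(o · conj o)`: the Euclidean norm of the eight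
real coefficients. -/
def norm (x : Octonion) : ℝ := Real.sqrt (‖x.q₁‖ ^ 2 + ‖x.q₂‖ ^ 2)

/-- `exp(μξ) = cos ξ + μ sin ξ` for an imaginary unit `μ`. -/
def oexp (μ : Octonion) (ξ : ℝ) : Octonion :=
  Real.cos ξ • (1 : Octonion) + Real.sin ξ • μ

end Octonion

open Octonion

namespace Quaternion

theorem re_mul_comm {R : Type*} [CommRing R] (a b : Quaternion R) : (a * b).re = (b * a).re := by
  simp only [re_mul]
  ring

theorem inner_mul_star_mul_eq_inner_mul_mul_star (a b c d : ℍ) :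
    inner ℝ (a * c) (star d * b) = inner ℝ (d * a) (b * star c) := by
  simp only [inner_def, star_mul, star_star, ← mul_assoc]
  rw [re_mul_comm _ d, ← mul_assoc, ← mul_assoc]

theorem norm_sub_mul_sq_add_norm_add_mul_sq (a b c d : ℍ) :
    ‖a * c - star d * b‖ ^ 2 + ‖d * a + b * star c‖ ^ 2 =
      (‖a‖ ^ 2 + ‖b‖ ^ 2) * (‖c‖ ^ 2 + ‖d‖ ^ 2) := by
  rw [norm_sub_sq_real, norm_add_sq_real, inner_mul_star_mul_eq_inner_mul_mul_star]
  simp only [norm_mul, norm_star]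
  ring

end Quaternion

/-- The octonion norm is multiplicative: `|o₁ o₂| = |o₁| |o₂|`. -/
theorem octonion_norm_mul (o₁ o₂ : Octonion) :
    Octonion.norm (o₁ * o₂) = Octonion.norm o₁ * Octonion.norm o₂ := by
  change √(‖o₁.q₁ * o₂.q₁ - star o₂.q₂ * o₁.q₂‖ ^ 2 + ‖o₂.q₂ * o₁.q₁ + o₁.q₂ * star o₂.q₁‖ ^ 2) = _
  rw [Quaternion.norm_sub_mul_sq_add_norm_add_mul_sq, Real.sqrt_mul (by positivity)]
  rfl
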